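/- Let $E:\mathbb{R}^d\to\mathbb{R}^d$ be bounded and log-Lipschitz: $|E(x)-E(y)|\leq C_2|x-y|(1+|\ln|x-y||)$ for $0<|x-y|<e^{-1}$ and $|E(x)-E(y)|\leq 2\|E\|_{L^\infty}$ always. Let $\gamma$ be a probability measure on $\mathbb{R}^d\times\mathbb{R}^d$ and set $\mathcal{E}=\int|x-y|^2\,d\gamma$. If $\mathcal{E}\leq e^{-1}$, then $\int|E(x)-E(y)|^2\,d\gamma\leq C\,(\mathcal{E}+\tfrac14 F(\mathcal{E}))$ where $F(u)=u(\ln u)^2$ and $C$ depends only on $C_2$ and $\|E\|_{L^\infty}$. -/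

import Mathlib

/-!
The paper bounds `∫ F(|x - y|²) dγ` by Jensen's inequality for the concave `F(u) = u (ln u)²`.
Here Jensen is replaced by an affine majorant in `u` of slope `(ln t)²`: for `0 ≤ u ≤ 1` and
`t > 0`, `F(u) ≤ (ln t)² u + 2 F(t) + 8 t`. For `u ≥ t` this is `(ln u)² ≤ (ln t)²`; for `u ≤ t`
write `u = t s` and use `s (ln s)² ≤ 4` on `(0, 1]`.

Squaring the log-Lipschitz bound gives `|E x - E y|² ≤ 2 C₂² |x - y|² + (C₂² / 2) F(|x - y|²)` at
distances below `e⁻¹`, and the `L^∞` bound gives `|E x - E y|² ≤ 4 M₀² e² |x - y|²` beyond.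
Integrating the resulting pointwise bound with `t = 𝓔` yields the estimate with
`C = 6 C₂² + 4 M₀² e²`.
-/

open MeasureTheory Real

noncomputable section

variable {d : ℕ}

local notation "E" => EuclideanSpace ℝ (Fin d)

lemma mul_log_sq_le_four {s : ℝ} (hs0 : 0 < s) (hs1 : s ≤ 1) : s * log s ^ 2 ≤ 4 := by
  have h := abs_log_mul_self_lt (√s) (sqrt_pos.2 hs0) (sqrt_le_one.2 hs1)
  have hs : s * log s ^ 2 = 4 * (log √s * √s) ^ 2 := by
    rw [log_sqrt hs0.le, mul_pow, sq_sqrt hs0.le]; ring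
  rw [hs, ← sq_abs]
  nlinarith [abs_nonneg (log √s * √s)]

lemma mul_log_sq_le_of_le {u t : ℝ} (hu : 0 < u) (hut : u ≤ t) :
    u * log u ^ 2 ≤ 2 * (t * log t ^ 2) + 8 * t := by
  have ht : 0 < t := hu.trans_le hut
  have hlog : log u = log t + log (u / t) := by
    rw [← log_mul ht.ne' (div_pos hu ht).ne', mul_div_cancel₀ _ ht.ne']
  have hscale : u / t * log (u / t) ^ 2 ≤ 4 :=
    mul_log_sq_le_four (div_pos hu ht) ((div_le_one ht).2 hut)
  calc u * log u ^ 2 ≤ 2 * (u * log t ^ 2) + 2 * u * log (u / t) ^ 2 := by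
        rw [hlog]
        nlinarith [mul_nonneg hu.le (sq_nonneg (log t - log (u / t)))]
    _ = 2 * (u * log t ^ 2) + 2 * t * (u / t * log (u / t) ^ 2) := by field_simp
    _ ≤ 2 * (t * log t ^ 2) + 2 * t * 4 := by gcongr
    _ = 2 * (t * log t ^ 2) + 8 * t := by ring

lemma mul_log_sq_le_of_ge {u t : ℝ} (ht : 0 < t) (htu : t ≤ u) (hu : u ≤ 1) :
    u * log u ^ 2 ≤ log t ^ 2 * u := by
  have h1 : log t ≤ log u := log_le_log ht htu
  have h2 : log u ≤ 0 := log_nonpos (ht.le.trans htu) hu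
  rw [mul_comm]
  exact mul_le_mul_of_nonneg_right (by nlinarith) (ht.le.trans htu)

lemma mul_log_sq_le {u t : ℝ} (hu0 : 0 ≤ u) (hu1 : u ≤ 1) (ht : 0 < t) :
    u * log u ^ 2 ≤ log t ^ 2 * u + (2 * (t * log t ^ 2) + 8 * t) := by
  rcases le_total u t with hut | htu
  · rcases hu0.eq_or_lt with rfl | hu
    · simp only [zero_mul, mul_zero, zero_add]; positivity
    linarith [mul_log_sq_le_of_le hu hut, mul_nonneg (sq_nonneg (log t)) hu0]
  · linarith [mul_log_sq_le_of_ge ht htu hu1, ht.le, mul_nonneg ht.le (sq_nonneg (log t))]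

section FieldDifference

variable {X Y : Type*} [NormedAddCommGroup X] [SeminormedAddCommGroup Y] {f : X → Y} {C M : ℝ}

lemma sq_norm_sub_le_of_logLipschitz_of_norm_lt (hf : ∀ x y, 0 < ‖x - y‖ → ‖x - y‖ < exp (-1) →
      ‖f x - f y‖ ≤ C * ‖x - y‖ * (1 + |log ‖x - y‖|))
    {x y : X} (hxy : 0 < ‖x - y‖) (hxy' : ‖x - y‖ < exp (-1)) :
    ‖f x - f y‖ ^ 2 ≤
      2 * C ^ 2 * ‖x - y‖ ^ 2 + C ^ 2 / 2 * (‖x - y‖ ^ 2 * log (‖x - y‖ ^ 2) ^ 2) := by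
  set r := ‖x - y‖
  have hlip : ‖f x - f y‖ ^ 2 ≤ C ^ 2 * r ^ 2 * (1 + |log r|) ^ 2 := by
    simpa only [mul_pow] using pow_le_pow_left₀ (norm_nonneg _) (hf x y hxy hxy') 2
  have hsq : (1 + |log r|) ^ 2 ≤ 2 + 2 * log r ^ 2 := by
    nlinarith [sq_nonneg (1 - |log r|), sq_abs (log r)]
  calc ‖f x - f y‖ ^ 2 ≤ C ^ 2 * r ^ 2 * (2 + 2 * log r ^ 2) := by
        exact hlip.trans (mul_le_mul_of_nonneg_left hsq (by positivity))
    _ = 2 * C ^ 2 * r ^ 2 + C ^ 2 / 2 * (r ^ 2 * log (r ^ 2) ^ 2) := by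
        rw [log_pow]; push_cast; ring

lemma sq_norm_sub_le_of_logLipschitz {t : ℝ} (hbdd : ∀ x, ‖f x‖ ≤ M)
    (hf : ∀ x y, 0 < ‖x - y‖ → ‖x - y‖ < exp (-1) →
      ‖f x - f y‖ ≤ C * ‖x - y‖ * (1 + |log ‖x - y‖|))
    (ht : 0 < t) (x y : X) :
    ‖f x - f y‖ ^ 2 ≤ (2 * C ^ 2 + 4 * M ^ 2 * exp 2 + C ^ 2 / 2 * log t ^ 2) * ‖x - y‖ ^ 2
      + (C ^ 2 * (t * log t ^ 2) + 4 * C ^ 2 * t) := by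
  set r := ‖x - y‖
  rcases (norm_nonneg (x - y)).eq_or_lt with hr | hr
  · rw [eq_comm, norm_eq_zero, sub_eq_zero] at hr
    rw [hr, sub_self, norm_zero, zero_pow two_ne_zero]
    positivity
  rcases lt_or_ge r (exp (-1)) with hsmall | hlarge
  · have hr1 : r ^ 2 ≤ 1 := pow_le_one₀ hr.le (hsmall.le.trans (exp_le_one_iff.2 (by norm_num)))
    have hF := mul_log_sq_le (by positivity) hr1 ht
    have hM : 0 ≤ 4 * M ^ 2 * exp 2 * r ^ 2 := by positivity
    linarith [sq_norm_sub_le_of_logLipschitz_of_norm_lt hf hr hsmall,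
      mul_le_mul_of_nonneg_left hF (by positivity : 0 ≤ C ^ 2 / 2)]
  · have hr2 : 1 ≤ exp 2 * r ^ 2 := by
      calc (1 : ℝ) = (exp 1 * exp (-1)) ^ 2 := by rw [← exp_add]; norm_num
        _ ≤ (exp 1 * r) ^ 2 := by gcongr
        _ = exp 2 * r ^ 2 := by rw [mul_pow, ← exp_nat_mul]; norm_num
    have hrest : 0 ≤ C ^ 2 / 2 * log t ^ 2 * r ^ 2 + 2 * C ^ 2 * r ^ 2 + C ^ 2 * (t * log t ^ 2)
        + 4 * C ^ 2 * t := by positivity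
    calc ‖f x - f y‖ ^ 2 ≤ (M + M) ^ 2 := by gcongr; exact norm_sub_le_of_le (hbdd x) (hbdd y)
      _ ≤ 4 * M ^ 2 * (exp 2 * r ^ 2) := by nlinarith [sq_nonneg M]
      _ ≤ _ := by linarith

variable [MeasurableSpace X] {μ : Measure (X × X)}

lemma integral_sq_norm_sub_eq_zero (f : X → Y) (hint : Integrable (fun p => ‖p.1 - p.2‖ ^ 2) μ)
    (h0 : ∫ p, ‖p.1 - p.2‖ ^ 2 ∂μ = 0) : ∫ p, ‖f p.1 - f p.2‖ ^ 2 ∂μ = 0 := by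
  have hdiag : (fun p : X × X => ‖p.1 - p.2‖ ^ 2) =ᵐ[μ] 0 :=
    (integral_eq_zero_iff_of_nonneg (fun p => by positivity) hint).1 h0
  refine integral_eq_zero_of_ae ?_
  filter_upwards [hdiag] with p hp
  rw [Pi.zero_apply, sq_eq_zero_iff, norm_eq_zero, sub_eq_zero] at hp
  simp [hp]

end FieldDifference

lemma integral_le_mul_integral_add {α : Type*} [MeasurableSpace α] {μ : Measure α}
    [IsProbabilityMeasure μ] {g u : α → ℝ} {A B : ℝ} (hg : ∀ x, 0 ≤ g x) (hu : Integrable u μ)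
    (hgu : ∀ x, g x ≤ A * u x + B) : ∫ x, g x ∂μ ≤ A * ∫ x, u x ∂μ + B := by
  calc ∫ x, g x ∂μ ≤ ∫ x, (A * u x + B) ∂μ :=
        integral_mono_of_nonneg (ae_of_all _ hg) ((hu.const_mul A).add (integrable_const B))
          (ae_of_all _ hgu)
    _ = A * ∫ x, u x ∂μ + B := by
        rw [integral_add (hu.const_mul A) (integrable_const B), integral_const_mul]
        simp

theorem logLipschitz_field_estimate_general (d : ℕ) (C₂ M₀ : ℝ) :
    ∃ C : ℝ, 0 ≤ C ∧
    ∀ (Ef : EuclideanSpace ℝ (Fin d) → EuclideanSpace ℝ (Fin d)),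
      Measurable Ef →
      (∀ x, ‖Ef x‖ ≤ M₀) →
      (∀ x y, 0 < ‖x - y‖ → ‖x - y‖ < Real.exp (-1) →
        ‖Ef x - Ef y‖ ≤ C₂ * ‖x - y‖ * (1 + |Real.log ‖x - y‖|)) →
    ∀ (γ : Measure (EuclideanSpace ℝ (Fin d) × EuclideanSpace ℝ (Fin d))),
      IsProbabilityMeasure γ →
      Integrable (fun p => ‖p.1 - p.2‖ ^ 2) γ →
      (∫ p, ‖p.1 - p.2‖ ^ 2 ∂γ) ≤ Real.exp (-1) →
      (∫ p, ‖Ef p.1 - Ef p.2‖ ^ 2 ∂γ)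
        ≤ C * ((∫ p, ‖p.1 - p.2‖ ^ 2 ∂γ)
            + (∫ p, ‖p.1 - p.2‖ ^ 2 ∂γ) * (Real.log (∫ p, ‖p.1 - p.2‖ ^ 2 ∂γ)) ^ 2 / 4) := by
  refine ⟨6 * C₂ ^ 2 + 4 * M₀ ^ 2 * exp 2, by positivity, ?_⟩
  intro Ef _ hbdd hlip γ _ hint _
  set t := ∫ p, ‖p.1 - p.2‖ ^ 2 ∂γ
  rcases (integral_nonneg fun p => sq_nonneg ‖p.1 - p.2‖ : 0 ≤ t).eq_or_lt with ht | ht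
  · rw [integral_sq_norm_sub_eq_zero Ef hint ht.symm]
    positivity
  have hmajor := integral_le_mul_integral_add (fun p => sq_nonneg _) hint
    fun p => sq_norm_sub_le_of_logLipschitz hbdd hlip ht p.1 p.2
  have hF : 0 ≤ M₀ ^ 2 * exp 2 * (t * log t ^ 2) := by positivity
  linarith

/-- If `Ef` is bounded by `M₀` and log-Lipschitz with constant `C₂`, then for any
probability measure `γ` on `ℝ^d × ℝ^d` with `𝓔 = ∫ |x-y|² dγ ≤ e⁻¹`, one has
`∫ |Ef(x) - Ef(y)|² dγ ≤ C (𝓔 + F(𝓔)/4)` with `F(u) = u (ln u)²` and `C`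
depending only on `C₂` and `M₀`. -/
theorem logLipschitz_field_estimate (d : ℕ) (C₂ M₀ : ℝ) (hC₂ : 0 ≤ C₂) (hM₀ : 0 ≤ M₀) :
    ∃ C : ℝ, 0 ≤ C ∧
    ∀ (Ef : EuclideanSpace ℝ (Fin d) → EuclideanSpace ℝ (Fin d)),
      Measurable Ef →
      (∀ x, ‖Ef x‖ ≤ M₀) →
      (∀ x y, 0 < ‖x - y‖ → ‖x - y‖ < Real.exp (-1) →
        ‖Ef x - Ef y‖ ≤ C₂ * ‖x - y‖ * (1 + |Real.log ‖x - y‖|)) →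
    ∀ (γ : Measure (EuclideanSpace ℝ (Fin d) × EuclideanSpace ℝ (Fin d))),
      IsProbabilityMeasure γ →
      Integrable (fun p => ‖p.1 - p.2‖ ^ 2) γ →
      (∫ p, ‖p.1 - p.2‖ ^ 2 ∂γ) ≤ Real.exp (-1) →
      (∫ p, ‖Ef p.1 - Ef p.2‖ ^ 2 ∂γ)
        ≤ C * ((∫ p, ‖p.1 - p.2‖ ^ 2 ∂γ)
            + (∫ p, ‖p.1 - p.2‖ ^ 2 ∂γ) * (Real.log (∫ p, ‖p.1 - p.2‖ ^ 2 ∂γ)) ^ 2 / 4) :=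
  logLipschitz_field_estimate_general d C₂ M₀

end
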